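/- (Regime (a) of the asymptotic performance of the running consensus detector.) Let N ≥ 1, α > 0, and γ ∈ ℝ. Let (m(k)) and (v(k)) be real sequences with v(k) > 0 for all k, satisfying m(k)/(k+1) → α/(2N) and v(k)/(k+1) → α/N² as k→∞. Define the miss and false-alarm probabilities P_M(k) = Q((−γ + m(k))/√(v(k))) and P_F(k) = Q((γ + m(k))/√(v(k))). Then both −log P_M(k)/(k+1) → α/8 and −log P_F(k)/(k+1) → α/8 as k→∞. -/

import Mathlib

open Filter Topology

/-- The Gaussian tail function `Q(t) = (1/√(2π)) ∫_t^∞ exp(−x²/2) dx`. -/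
noncomputable def gaussQ (t : ℝ) : ℝ :=
  (Real.sqrt (2 * Real.pi))⁻¹ * ∫ x in Set.Ioi t, Real.exp (-(x ^ 2) / 2)

lemma intOn_exp (t : ℝ) : MeasureTheory.IntegrableOn (fun x : ℝ => Real.exp (-(x ^ 2) / 2)) (Set.Ioi t) := by
  have h := (integrable_exp_neg_mul_sq (by norm_num : (0:ℝ) < 1/2)).integrableOn (s := Set.Ioi t)
  exact h.congr_fun (fun x _ => by ring_nf) measurableSet_Ioi

lemma intOn_mul_exp (t : ℝ) : MeasureTheory.IntegrableOn (fun x : ℝ => x * Real.exp (-(x ^ 2) / 2)) (Set.Ioi t) := by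
  have h := (integrable_mul_exp_neg_mul_sq (by norm_num : (0:ℝ) < 1/2)).integrableOn (s := Set.Ioi t)
  exact h.congr_fun (fun x _ => by ring_nf) measurableSet_Ioi

lemma key_int (t : ℝ) : ∫ x in Set.Ioi t, x * Real.exp (-(x ^ 2) / 2) = Real.exp (-(t ^ 2) / 2) := by
  have hderiv : ∀ x ∈ Set.Ici t, HasDerivAt (fun y : ℝ => -Real.exp (-(y ^ 2) / 2))
      (x * Real.exp (-(x ^ 2) / 2)) x := by
    intro x _
    have h1 : HasDerivAt (fun y : ℝ => -(y ^ 2) / 2) (-x) x := by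
      have := ((hasDerivAt_pow 2 x).neg).div_const 2
      refine this.congr_deriv ?_
      simp; ring
    have h2 := (h1.exp).neg
    refine h2.congr_deriv ?_
    ring
  have htend : Tendsto (fun y : ℝ => -Real.exp (-(y ^ 2) / 2)) atTop (𝓝 0) := by
    rw [show (0:ℝ) = -0 by ring]
    refine Tendsto.neg ?_
    refine Real.tendsto_exp_atBot.comp ?_
    have h1 : Tendsto (fun y : ℝ => y ^ 2 / 2) atTop atTop :=
      (tendsto_pow_atTop (by norm_num)).atTop_div_const (by norm_num)
    have := tendsto_neg_atTop_atBot.comp h1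
    exact this.congr (fun y => by simp [Function.comp]; ring)
  have := MeasureTheory.integral_Ioi_of_hasDerivAt_of_tendsto' hderiv (intOn_mul_exp t) htend
  rw [this]; ring

lemma gaussQ_le {t : ℝ} (ht : 0 < t) :
    gaussQ t ≤ (Real.sqrt (2 * Real.pi))⁻¹ * (Real.exp (-(t ^ 2) / 2) / t) := by
  have hsq : (0:ℝ) < Real.sqrt (2 * Real.pi) :=
    Real.sqrt_pos.2 (by positivity)
  rw [gaussQ]
  refine mul_le_mul_of_nonneg_left ?_ (by positivity)
  have hmono : ∫ x in Set.Ioi t, Real.exp (-(x ^ 2) / 2) ≤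
      ∫ x in Set.Ioi t, t⁻¹ * (x * Real.exp (-(x ^ 2) / 2)) := by
    refine MeasureTheory.setIntegral_mono_on (intOn_exp t)
      ((intOn_mul_exp t).const_mul _) measurableSet_Ioi ?_
    intro x hx
    have hx' : t < x := hx
    have hxe : (0:ℝ) < Real.exp (-(x ^ 2) / 2) := Real.exp_pos _
    rw [show t⁻¹ * (x * Real.exp (-(x ^ 2) / 2)) = (x / t) * Real.exp (-(x ^ 2) / 2) by ring]
    exact le_mul_of_one_le_left hxe.le ((one_le_div ht).2 hx'.le)
  calc ∫ x in Set.Ioi t, Real.exp (-(x ^ 2) / 2)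
      ≤ ∫ x in Set.Ioi t, t⁻¹ * (x * Real.exp (-(x ^ 2) / 2)) := hmono
    _ = t⁻¹ * ∫ x in Set.Ioi t, x * Real.exp (-(x ^ 2) / 2) :=
        MeasureTheory.integral_const_mul _ _
    _ = Real.exp (-(t ^ 2) / 2) / t := by rw [key_int]; ring

lemma gaussQ_ge {t : ℝ} (ht : 0 ≤ t) :
    (Real.sqrt (2 * Real.pi))⁻¹ * Real.exp (-((t + 1) ^ 2) / 2) ≤ gaussQ t := by
  rw [gaussQ]
  refine mul_le_mul_of_nonneg_left ?_ (by positivity)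
  have h1 : ∫ x in Set.Ioc t (t + 1), Real.exp (-((t+1) ^ 2) / 2) ≤
      ∫ x in Set.Ioc t (t + 1), Real.exp (-(x ^ 2) / 2) := by
    refine MeasureTheory.setIntegral_mono_on
      (MeasureTheory.integrableOn_const measure_Ioc_lt_top.ne)
      ((intOn_exp t).mono_set Set.Ioc_subset_Ioi_self) measurableSet_Ioc ?_
    intro x hx
    refine Real.exp_le_exp.2 ?_
    have h0 : 0 < x := lt_of_le_of_lt ht hx.1
    nlinarith [hx.2]
  have h2 : ∫ x in Set.Ioc t (t + 1), Real.exp (-((t+1) ^ 2) / 2) = Real.exp (-((t+1) ^ 2) / 2) := by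
    simp [Real.volume_Ioc]
  have h3 : ∫ x in Set.Ioc t (t + 1), Real.exp (-(x ^ 2) / 2) ≤
      ∫ x in Set.Ioi t, Real.exp (-(x ^ 2) / 2) := by
    refine MeasureTheory.setIntegral_mono_set (intOn_exp t) ?_ ?_
    · exact Filter.Eventually.of_forall (fun x => (Real.exp_pos _).le)
    · exact (HasSubset.Subset.eventuallyLE Set.Ioc_subset_Ioi_self)
  linarith

lemma gaussQ_pos {t : ℝ} (ht : 0 ≤ t) : 0 < gaussQ t := by
  have := gaussQ_ge ht
  have h : (0:ℝ) < (Real.sqrt (2 * Real.pi))⁻¹ * Real.exp (-((t + 1) ^ 2) / 2) := by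
    have : (0:ℝ) < Real.sqrt (2 * Real.pi) := Real.sqrt_pos.2 (by positivity)
    positivity
  linarith

lemma neg_log_gaussQ_tendsto (t : ℕ → ℝ) (L : ℝ) (hL : 0 < L)
    (hpos : ∀ᶠ k in atTop, 0 < t k)
    (h : Tendsto (fun k => (t k) ^ 2 / ((k : ℝ) + 1)) atTop (𝓝 (2 * L))) :
    Tendsto (fun k => -Real.log (gaussQ (t k)) / ((k : ℝ) + 1)) atTop (𝓝 L) := by
  have hk1 : Tendsto (fun k : ℕ => (k : ℝ) + 1) atTop atTop :=
    tendsto_atTop_add_const_right _ _ tendsto_natCast_atTop_atTop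
  have hsq_top : Tendsto (fun k => (t k) ^ 2) atTop atTop := by
    have := Tendsto.pos_mul_atTop (by linarith : (0:ℝ) < 2 * L) h hk1
    refine this.congr' (Filter.Eventually.of_forall fun k => ?_)
    field_simp
  have ht1 : ∀ᶠ k in atTop, 1 ≤ t k := by
    filter_upwards [hpos, hsq_top.eventually_ge_atTop 1] with k h1 h2
    nlinarith
  set c := Real.log (Real.sqrt (2 * Real.pi)) with hc
  have hsqpi : (0:ℝ) < Real.sqrt (2 * Real.pi) := Real.sqrt_pos.2 (by positivity)
  -- inverse of (k+1) tends to 0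
  have hinv : Tendsto (fun k : ℕ => ((k : ℝ) + 1)⁻¹) atTop (𝓝 0) :=
    tendsto_inv_atTop_zero.comp hk1
  -- t k / (k+1) → 0
  have hsq2 : Tendsto (fun k => (t k) ^ 2 / ((k : ℝ) + 1) ^ 2) atTop (𝓝 0) := by
    have := h.mul hinv
    rw [mul_zero] at this
    refine this.congr (fun k => ?_)
    simp only [div_eq_mul_inv, pow_two, mul_inv]
    ring
  have hdiv0 : Tendsto (fun k => t k / ((k : ℝ) + 1)) atTop (𝓝 0) := by
    have hcont := (Real.continuous_sqrt.tendsto 0).comp hsq2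
    rw [Real.sqrt_zero] at hcont
    refine hcont.congr' ?_
    filter_upwards [hpos] with k hk
    have hk1' : (0:ℝ) < (k : ℝ) + 1 := by positivity
    rw [Function.comp_apply, show (t k) ^ 2 / ((k:ℝ)+1) ^ 2 = (t k / ((k:ℝ)+1)) ^ 2 by
        rw [div_pow],
      Real.sqrt_sq (by positivity)]
  -- log (t k) / (k+1) → 0
  have hlog0 : Tendsto (fun k => Real.log (t k) / ((k : ℝ) + 1)) atTop (𝓝 0) := by
    refine tendsto_of_tendsto_of_tendsto_of_le_of_le' tendsto_const_nhds hdiv0 ?_ ?_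
    · filter_upwards [ht1] with k hk
      have : (0:ℝ) ≤ Real.log (t k) := Real.log_nonneg hk
      positivity
    · filter_upwards [ht1] with k hk
      have h1 : Real.log (t k) ≤ t k := by
        have := Real.log_le_sub_one_of_pos (by linarith : (0:ℝ) < t k)
        linarith
      have hk1' : (0:ℝ) < (k : ℝ) + 1 := by positivity
      exact (div_le_div_iff_of_pos_right hk1').2 h1
  have hhalf : Tendsto (fun k => (t k) ^ 2 / ((k : ℝ) + 1) / 2) atTop (𝓝 L) := by
    have := h.div_const 2
    rwa [show 2 * L / 2 = L by ring] at this
  have hconst : ∀ a : ℝ, Tendsto (fun k : ℕ => a / ((k : ℝ) + 1)) atTop (𝓝 0) := by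
    intro a
    have := hinv.const_mul a
    rw [mul_zero] at this
    exact this.congr (fun k => by rw [div_eq_mul_inv])
  have hlow : Tendsto (fun k => ((t k) ^ 2 / 2 + Real.log (t k) + c) / ((k : ℝ) + 1))
      atTop (𝓝 L) := by
    have := (hhalf.add hlog0).add (hconst c)
    rw [add_zero, add_zero] at this
    exact this.congr (fun k => by ring)
  have hupp : Tendsto (fun k => ((t k + 1) ^ 2 / 2 + c) / ((k : ℝ) + 1)) atTop (𝓝 L) := by
    have := (hhalf.add hdiv0).add (hconst (1 / 2 + c))
    rw [add_zero, add_zero] at this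
    exact this.congr (fun k => by ring)
  refine tendsto_of_tendsto_of_tendsto_of_le_of_le' hlow hupp ?_ ?_
  · filter_upwards [ht1] with k hk
    have htk : (0:ℝ) < t k := by linarith
    have hQpos : 0 < gaussQ (t k) := gaussQ_pos htk.le
    have hle := gaussQ_le htk
    have hlog := Real.log_le_log hQpos hle
    rw [Real.log_mul (by positivity) (by positivity), Real.log_inv,
      Real.log_div (Real.exp_ne_zero _) (by positivity), Real.log_exp] at hlog
    have hk1' : (0:ℝ) < (k : ℝ) + 1 := by positivity
    refine (div_le_div_iff_of_pos_right hk1').2 ?_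
    linarith
  · filter_upwards [ht1] with k hk
    have htk : (0:ℝ) < t k := by linarith
    have hQpos : 0 < gaussQ (t k) := gaussQ_pos htk.le
    have hge := gaussQ_ge htk.le
    have hlog := Real.log_le_log (by positivity) hge
    rw [Real.log_mul (by positivity) (Real.exp_ne_zero _), Real.log_inv, Real.log_exp] at hlog
    have hk1' : (0:ℝ) < (k : ℝ) + 1 := by positivity
    refine (div_le_div_iff_of_pos_right hk1').2 ?_
    linarith

/-- Regime (a) of the asymptotic performance of the running consensus detector:
if the mean satisfies `m(k)/(k+1) → α/(2N)` and the variance satisfies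
`v(k)/(k+1) → α/N²`, then the miss probability
`P_M(k) = Q((−γ + m(k))/√v(k))` and the false-alarm probability
`P_F(k) = Q((γ + m(k))/√v(k))` both decay exponentially with rate `α/8`:
`−log P_M(k)/(k+1) → α/8` and `−log P_F(k)/(k+1) → α/8`. -/
theorem rcd_regime_a (N : ℕ) (hN : 1 ≤ N) (α : ℝ) (hα : 0 < α) (γ : ℝ)
    (m v : ℕ → ℝ) (hv_pos : ∀ k, 0 < v k)
    (hm : Tendsto (fun k => m k / ((k : ℝ) + 1)) atTop (𝓝 (α / (2 * N))))
    (hv : Tendsto (fun k => v k / ((k : ℝ) + 1)) atTop (𝓝 (α / (N : ℝ) ^ 2))) :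
    Tendsto
      (fun k => -Real.log (gaussQ ((-γ + m k) / Real.sqrt (v k))) / ((k : ℝ) + 1))
      atTop (𝓝 (α / 8)) ∧
    Tendsto
      (fun k => -Real.log (gaussQ ((γ + m k) / Real.sqrt (v k))) / ((k : ℝ) + 1))
      atTop (𝓝 (α / 8)) := by
  have hN' : (0:ℝ) < (N : ℝ) := by exact_mod_cast Nat.lt_of_lt_of_le Nat.zero_lt_one hN
  have hk1 : Tendsto (fun k : ℕ => (k : ℝ) + 1) atTop atTop :=
    tendsto_atTop_add_const_right _ _ tendsto_natCast_atTop_atTop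
  have hinv : Tendsto (fun k : ℕ => ((k : ℝ) + 1)⁻¹) atTop (𝓝 0) :=
    tendsto_inv_atTop_zero.comp hk1
  have hconst : ∀ a : ℝ, Tendsto (fun k : ℕ => a / ((k : ℝ) + 1)) atTop (𝓝 0) := by
    intro a
    have := hinv.const_mul a
    rw [mul_zero] at this
    exact this.congr (fun k => by rw [div_eq_mul_inv])
  have hm_top : Tendsto m atTop atTop := by
    have hpos2 : (0:ℝ) < α / (2 * N) := by positivity
    have := Tendsto.pos_mul_atTop hpos2 hm hk1
    refine this.congr (fun k => ?_)
    have hk1' : ((k:ℝ)+1) ≠ 0 := by positivity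
    field_simp
  have main : ∀ γ' : ℝ, Tendsto
      (fun k => -Real.log (gaussQ ((γ' + m k) / Real.sqrt (v k))) / ((k : ℝ) + 1))
      atTop (𝓝 (α / 8)) := by
    intro γ'
    refine neg_log_gaussQ_tendsto _ _ (by positivity) ?_ ?_
    · filter_upwards [hm_top.eventually_gt_atTop (-γ')] with k hk
      have h1 : (0:ℝ) < γ' + m k := by linarith
      have h2 : (0:ℝ) < Real.sqrt (v k) := Real.sqrt_pos.2 (hv_pos k)
      positivity
    · have h1 : Tendsto (fun k => (γ' + m k) / ((k : ℝ) + 1)) atTop (𝓝 (α / (2 * N))) := by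
        have := (hconst γ').add hm
        rw [zero_add] at this
        exact this.congr (fun k => by rw [add_div])
      have h2 : Tendsto (fun k : ℕ => ((k : ℝ) + 1) / v k) atTop (𝓝 ((α / (N : ℝ) ^ 2))⁻¹) := by
        have := hv.inv₀ (by positivity)
        exact this.congr (fun k => inv_div _ _)
      have h3 := (h1.mul h1).mul h2
      have heq : α / (2 * N) * (α / (2 * N)) * (α / (N : ℝ) ^ 2)⁻¹ = 2 * (α / 8) := by
        rw [inv_div]
        field_simp
        ring
      rw [heq] at h3
      refine h3.congr (fun k => ?_)
      have hk1' : (0:ℝ) < (k : ℝ) + 1 := by positivity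
      have hvk := hv_pos k
      rw [div_pow, Real.sq_sqrt hvk.le]
      field_simp
  exact ⟨main (-γ), main γ⟩
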